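/- Let f : ℝⁿ → ℝ be differentiable with gradient g, let x*, x_k ∈ ℝⁿ with f(x*) ≤ f(x_k), and suppose: (i) the Armijo condition f(x_{k+1}) ≤ f(x_k) + σ₁ g(x_k)ᵀs_k holds with σ₁ > 0, where x_{k+1} = x_k + s_k and s_k = λ_k d_k with λ_k > 0; (ii) ‖s_k‖ ≥ α₁ ‖g(x_k)‖ cos θ_k with α₁ > 0, where cos θ_k = −g(x_k)ᵀd_k/(‖g(x_k)‖‖d_k‖) ∈ [0,1] and g(x_k) ≠ 0, d_k ≠ 0; (iii) ‖g(x_k)‖ ≥ m ‖x_k − x*‖ with m > 0; and (iv) f(x_k) − f(x*) ≤ M₅ ‖x_k − x*‖² with M₅ > 0. Then, with α₂ = σ₁α₁m²/M₅, one has f(x_{k+1}) − f(x*) ≤ (1 − α₂ cos²θ_k)(f(x_k) − f(x*)). -/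
import Mathlib


open scoped RealInnerProductSpace

/-- Per-iteration contraction (Eq. 5.8): under the Armijo condition, the step-length
lower bound `‖s_k‖ ≥ α₁‖g(x_k)‖cos θ_k`, the gradient bound `‖g(x_k)‖ ≥ m‖x_k − x*‖`
and the quadratic bound `f(x_k) − f(x*) ≤ M₅‖x_k − x*‖²`, one has, with
`α₂ = σ₁α₁m²/M₅`, `f(x_{k+1}) − f(x*) ≤ (1 − α₂ cos²θ_k)(f(x_k) − f(x*))`. -/
theorem per_iteration_contraction (n : ℕ) (f : EuclideanSpace ℝ (Fin n) → ℝ)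
    (g : EuclideanSpace ℝ (Fin n) → EuclideanSpace ℝ (Fin n))
    (hgrad : ∀ z, HasGradientAt f (g z) z)
    (xstar xk dk : EuclideanSpace ℝ (Fin n)) (lamk σ₁ α₁ m M₅ : ℝ)
    (hσ₁ : 0 < σ₁) (hα₁ : 0 < α₁) (hm : 0 < m) (hM₅ : 0 < M₅)
    (hgk : g xk ≠ 0) (hdk : dk ≠ 0) (hlam : 0 < lamk)
    (hfs : f xstar ≤ f xk)
    (c : ℝ) (hc : c = -⟪g xk, dk⟫ / (‖g xk‖ * ‖dk‖)) (hc0 : 0 ≤ c) (hc1 : c ≤ 1)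
    (harmijo : f (xk + lamk • dk) ≤ f xk + σ₁ * ⟪g xk, lamk • dk⟫)
    (hstep : α₁ * ‖g xk‖ * c ≤ ‖lamk • dk‖)
    (hglow : m * ‖xk - xstar‖ ≤ ‖g xk‖)
    (hquad : f xk - f xstar ≤ M₅ * ‖xk - xstar‖ ^ 2) :
    f (xk + lamk • dk) - f xstar ≤
      (1 - σ₁ * α₁ * m ^ 2 / M₅ * c ^ 2) * (f xk - f xstar) := by
  have hG : 0 < ‖g xk‖ := norm_pos_iff.mpr hgk
  have hD : 0 < ‖dk‖ := norm_pos_iff.mpr hdk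
  have hS : ‖lamk • dk‖ = lamk * ‖dk‖ := by
    rw [norm_smul, Real.norm_eq_abs, abs_of_pos hlam]
  have hip : ⟪g xk, dk⟫ = -c * (‖g xk‖ * ‖dk‖) := by
    rw [hc]; field_simp
  have hinner : ⟪g xk, lamk • dk⟫ = lamk * ⟪g xk, dk⟫ := real_inner_smul_right _ _ _
  have hA : 0 ≤ f xk - f xstar := by linarith
  have hx2 : (f xk - f xstar) / M₅ ≤ ‖xk - xstar‖ ^ 2 := by
    rw [div_le_iff₀ hM₅]; linarith
  have hg2 : m ^ 2 * ‖xk - xstar‖ ^ 2 ≤ ‖g xk‖ ^ 2 := by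
    have h := mul_le_mul hglow hglow (by positivity) hG.le
    nlinarith [norm_nonneg (xk - xstar)]
  have key : ⟪g xk, lamk • dk⟫ ≤ -(α₁ * m ^ 2 / M₅ * c ^ 2 * (f xk - f xstar)) := by
    rw [hinner, hip]
    have h1 : lamk * (-c * (‖g xk‖ * ‖dk‖)) = -(c * ‖g xk‖ * (lamk * ‖dk‖)) := by ring
    rw [h1]
    rw [hS] at hstep
    have h2 : c * ‖g xk‖ * (α₁ * ‖g xk‖ * c) ≤ c * ‖g xk‖ * (lamk * ‖dk‖) :=
      mul_le_mul_of_nonneg_left hstep (by positivity)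
    have h3 : α₁ * m ^ 2 / M₅ * c ^ 2 * (f xk - f xstar) ≤ c * ‖g xk‖ * (α₁ * ‖g xk‖ * c) := by
      have t1 := mul_le_mul_of_nonneg_left hx2 (show (0:ℝ) ≤ α₁ * c ^ 2 * m ^ 2 by positivity)
      have t2 := mul_le_mul_of_nonneg_left hg2 (show (0:ℝ) ≤ α₁ * c ^ 2 by positivity)
      have hre : α₁ * m ^ 2 / M₅ * c ^ 2 * (f xk - f xstar) =
          α₁ * c ^ 2 * m ^ 2 * ((f xk - f xstar) / M₅) := by ring
      rw [hre]
      linarith [t1, t2]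
    linarith
  have := mul_le_mul_of_nonneg_left key hσ₁.le
  have hfin : f (xk + lamk • dk) - f xstar ≤
      (f xk - f xstar) - σ₁ * α₁ * m ^ 2 / M₅ * c ^ 2 * (f xk - f xstar) := by
    have heq : σ₁ * -(α₁ * m ^ 2 / M₅ * c ^ 2 * (f xk - f xstar)) =
        -(σ₁ * α₁ * m ^ 2 / M₅ * c ^ 2 * (f xk - f xstar)) := by ring
    linarith [harmijo]
  linarith [hfin]
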